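/- arXiv:1705.07643 — 10 statements merged into one kernel-verified Lean document; each statement's English description precedes it below -/
import Mathlib

section
/- The greedy choice function that selects at most the top k contracts by utility-per-unit-wage satisfies irrelevance of rejected contracts: for any X' and any X'' disjoint from X', if Ch(X' ∪ X'') ⊆ X', then Ch(X' ∪ X'') = Ch(X'). -/
/-- The greedy choice function that selects at most the top `k` contracts
by utility-per-unit-wage satisfies irrelevance of rejected contracts:
for `X''` disjoint from `X'`, if `Ch(X' ∪ X'') ⊆ X'` then `Ch(X' ∪ X'') = Ch(X')`. -/
theorem greedy_topk_irrelevance_of_rejected_contracts {ι : Type*} [DecidableEq ι]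
    (w f : ι → ℝ) (hw : ∀ x, 0 < w x) (hf : ∀ x, 0 < f x)
    (pr : ι → ι → Prop)
    (hpr_trans : Transitive pr)
    (hpr_total : ∀ x y : ι, x ≠ y → pr x y ∨ pr y x)
    (hpr_irrefl : ∀ x : ι, ¬ pr x x)
    (hpr_ratio : ∀ x y : ι, f y / w y < f x / w x → pr x y)
    (k : ℕ) (hk : 0 < k)
    (Ch : Finset ι → Finset ι)
    (hCh_sub : ∀ A : Finset ι, Ch A ⊆ A)
    (hCh_card : ∀ A : Finset ι, (Ch A).card = min k A.card)
    (hCh_top : ∀ A : Finset ι, ∀ x ∈ Ch A, ∀ y ∈ A \ Ch A, pr x y)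
    (A B : Finset ι) (hdisj : Disjoint A B)
    (hsub : Ch (A ∪ B) ⊆ A) :
    Ch (A ∪ B) = Ch A := by
  have hcard1 := hCh_card (A ∪ B)
  have hcard2 := hCh_card A
  have hle : (Ch (A ∪ B)).card ≤ A.card := Finset.card_le_card hsub
  have hAle : A.card ≤ (A ∪ B).card := Finset.card_le_card Finset.subset_union_left
  have hcards : (Ch (A ∪ B)).card = (Ch A).card := by omega
  have hsubset : Ch (A ∪ B) ⊆ Ch A := by
    intro x hx
    by_contra hxnot
    have hne : ∃ y ∈ Ch A, y ∉ Ch (A ∪ B) := by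
      by_contra hns
      push_neg at hns
      have : Ch A = Ch (A ∪ B) :=
        Finset.eq_of_subset_of_card_le hns (le_of_eq hcards)
      exact hxnot (this ▸ hx)
    obtain ⟨y, hyA, hynot⟩ := hne
    have hxy : pr x y := hCh_top (A ∪ B) x hx y
      (Finset.mem_sdiff.mpr ⟨Finset.mem_union_left B (hCh_sub A hyA), hynot⟩)
    have hyx : pr y x := hCh_top A y hyA x
      (Finset.mem_sdiff.mpr ⟨hsub hx, hxnot⟩)
    exact hpr_irrefl x (hpr_trans hxy hyx)
  exact Finset.eq_of_subset_of_card_le hsubset (le_of_eq hcards.symm)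
end

section
/- If |X'| > k and Ch(X') selects the top k contracts of X' by utility-per-unit-wage, then for every subset X'' ⊆ X' with total wage w(X'') ≤ w(Ch(X')), the total utility satisfies f(X'') ≤ f(Ch(X')). (Greedy is optimal for the integral knapsack with capacity equal to its own total wage.) -/
/-- If `|X'| > k` and `ChX` is the set of the top `k` contracts of `X'`
by utility-per-unit-wage (ties broken by a fixed strict total order `pr`), then for
every `X'' ⊆ X'` with total wage at most `w(ChX)`, we have `f(X'') ≤ f(ChX)`:
greedy is optimal for the integral knapsack with capacity equal to its own total wage. -/
theorem greedy_topk_knapsack_optimal {ι : Type*} [DecidableEq ι]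
    (w f : ι → ℝ) (hw : ∀ x, 0 < w x) (hf : ∀ x, 0 < f x)
    (pr : ι → ι → Prop)
    (hpr_trans : Transitive pr)
    (hpr_total : ∀ x y : ι, x ≠ y → pr x y ∨ pr y x)
    (hpr_irrefl : ∀ x : ι, ¬ pr x x)
    (hpr_ratio : ∀ x y : ι, f y / w y < f x / w x → pr x y)
    (k : ℕ) (hk : 0 < k)
    (X' ChX : Finset ι) (hcard : k < X'.card)
    (hCh_sub : ChX ⊆ X')
    (hCh_card : ChX.card = k)
    (hCh_top : ∀ x ∈ ChX, ∀ y ∈ X' \ ChX, pr x y)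
    (X'' : Finset ι) (hX'' : X'' ⊆ X')
    (hwle : ∑ x ∈ X'', w x ≤ ∑ x ∈ ChX, w x) :
    ∑ x ∈ X'', f x ≤ ∑ x ∈ ChX, f x := by
  have hChne : ChX.Nonempty := Finset.card_pos.mp (by omega)
  obtain ⟨m, hm, hmin⟩ := ChX.exists_min_image (fun x => f x / w x) hChne
  set c : ℝ := f m / w m with hc
  have hcpos : 0 < c := div_pos (hf m) (hw m)
  -- asymmetry of pr
  have hasym : ∀ x y : ι, pr x y → ¬ pr y x := by
    intro x y hxy hyx
    exact hpr_irrefl x (hpr_trans hxy hyx)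
  -- elements outside ChX have ratio ≤ c
  have hout : ∀ y ∈ X' \ ChX, f y / w y ≤ c := by
    intro y hy
    by_contra hlt
    push_neg at hlt
    exact hasym m y (hCh_top m hm y hy) (hpr_ratio y m hlt)
  -- elements of ChX have ratio ≥ c
  have hin : ∀ x ∈ ChX, c ≤ f x / w x := hmin
  -- decompose sums
  have hfA : ∑ x ∈ X'' \ ChX, f x ≤ c * ∑ x ∈ X'' \ ChX, w x := by
    rw [Finset.mul_sum]
    apply Finset.sum_le_sum
    intro x hx
    have hx' : x ∈ X' \ ChX := by
      rw [Finset.mem_sdiff] at hx ⊢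
      exact ⟨hX'' hx.1, hx.2⟩
    have := hout x hx'
    rw [div_le_iff₀ (hw x)] at this
    linarith [this]
  have hfB : c * ∑ x ∈ ChX \ X'', w x ≤ ∑ x ∈ ChX \ X'', f x := by
    rw [Finset.mul_sum]
    apply Finset.sum_le_sum
    intro x hx
    have := hin x (Finset.mem_sdiff.mp hx).1
    rw [le_div_iff₀ (hw x)] at this
    linarith [this]
  have hwAB : ∑ x ∈ X'' \ ChX, w x ≤ ∑ x ∈ ChX \ X'', w x := by
    have h1 := Finset.sum_inter_add_sum_sdiff X'' ChX w
    have h2 := Finset.sum_inter_add_sum_sdiff ChX X'' w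
    rw [Finset.inter_comm] at h2
    linarith
  have h1 := Finset.sum_inter_add_sum_sdiff X'' ChX f
  have h2 := Finset.sum_inter_add_sum_sdiff ChX X'' f
  rw [Finset.inter_comm] at h2
  nlinarith [hfA, hfB, hwAB, hcpos]
end

section
/- The choice function that greedily adds contracts in decreasing order of utility-per-unit-wage while the accumulated wage is strictly below B satisfies substitutability: for X'' ⊆ X', X'' \ Ch(X'') ⊆ X' \ Ch(X'). -/
/-- The choice function that processes the contracts in decreasing order
of utility-per-unit-wage (ties broken by a fixed strict total order `pr`) and adds the
current contract whenever the accumulated wage is strictly below `B` satisfies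
substitutability: for `X'' ⊆ X'`, `X'' \ Ch(X'') ⊆ X' \ Ch(X')`. -/
theorem greedy_budget_substitutable {ι : Type*} [DecidableEq ι]
    (w f : ι → ℝ) (B : ℝ) (hB : 0 < B)
    (hw : ∀ x, 0 < w x) (hf : ∀ x, 0 < f x)
    (pr : ι → ι → Prop) [DecidableRel pr]
    (hpr_trans : Transitive pr)
    (hpr_total : ∀ x y : ι, x ≠ y → pr x y ∨ pr y x)
    (hpr_irrefl : ∀ x : ι, ¬ pr x x)
    (hpr_ratio : ∀ x y : ι, f y / w y < f x / w x → pr x y)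
    (Ch : Finset ι → Finset ι)
    (hsub : ∀ A : Finset ι, Ch A ⊆ A)
    (hprefix : ∀ A : Finset ι, ∀ x ∈ Ch A, ∀ y ∈ A, pr y x → y ∈ Ch A)
    (hadd : ∀ A : Finset ι, ∀ x ∈ Ch A, ∑ y ∈ (Ch A).filter (fun y => pr y x), w y < B)
    (hrej : ∀ A : Finset ι, ∀ x ∈ A \ Ch A, B ≤ ∑ y ∈ (Ch A).filter (fun y => pr y x), w y)
    (X'' X' : Finset ι) (hXX : X'' ⊆ X') :
    X'' \ Ch X'' ⊆ X' \ Ch X' := by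
  have hw0 : ∀ x, (0:ℝ) ≤ w x := fun x => (hw x).le
  -- every nonempty finset has a pr-maximal element
  have hmax : ∀ s : Finset ι, s.Nonempty → ∃ m ∈ s, ∀ z ∈ s, z ≠ m → pr z m := by
    intro s
    induction s using Finset.induction_on with
    | empty => intro h; exact absurd h (by simp)
    | insert _ _ ha ih =>
      rename_i a s
      intro _
      rcases s.eq_empty_or_nonempty with rfl | hs
      · exact ⟨a, by simp, by simp⟩
      · obtain ⟨m, hm, hmmax⟩ := ih hs
        by_cases hma : pr m a
        · refine ⟨a, Finset.mem_insert_self _ _, ?_⟩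
          intro z hz hza
          rcases Finset.mem_insert.mp hz with rfl | hz
          · exact absurd rfl hza
          · by_cases hzm : z = m
            · subst hzm; exact hma
            · exact hpr_trans (hmmax z hz hzm) hma
        · by_cases ham : a = m
          · subst ham
            refine ⟨a, Finset.mem_insert_self _ _, ?_⟩
            intro z hz hza
            rcases Finset.mem_insert.mp hz with rfl | hz
            · exact absurd rfl hza
            · exact hmmax z hz hza
          · refine ⟨m, Finset.mem_insert_of_mem hm, ?_⟩
            intro z hz hzm
            rcases Finset.mem_insert.mp hz with rfl | hz
            · rcases hpr_total z m ham with h | h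
              · exact h
              · exact absurd h hma
            · exact hmmax z hz hzm
  -- key invariant
  have key : ∀ n : ℕ, ∀ x : ι, (X''.filter (fun z => pr z x)).card ≤ n →
      (∑ y ∈ (Ch X'').filter (fun y => pr y x), w y)
        ≤ ∑ y ∈ (Ch X').filter (fun y => pr y x), w y ∨
      B ≤ ∑ y ∈ (Ch X').filter (fun y => pr y x), w y := by
    intro n
    induction n with
    | zero =>
      intro x hx
      left
      have hempty : (Ch X'').filter (fun y => pr y x) = ∅ := by
        rw [Finset.eq_empty_iff_forall_notMem]
        intro z hz
        have hz' := Finset.mem_filter.mp hz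
        have hmem : z ∈ X''.filter (fun z => pr z x) :=
          Finset.mem_filter.mpr ⟨hsub X'' hz'.1, hz'.2⟩
        rw [Finset.card_eq_zero.mp (Nat.le_zero.mp hx)] at hmem
        exact absurd hmem (Finset.notMem_empty z)
      rw [hempty, Finset.sum_empty]
      exact Finset.sum_nonneg fun i _ => hw0 i
    | succ n ih =>
      intro x _
      rename_i hx
      set T := (Ch X'').filter (fun y => pr y x) with hT
      rcases T.eq_empty_or_nonempty with hTe | hTne
      · left
        rw [hTe, Finset.sum_empty]
        exact Finset.sum_nonneg fun i _ => hw0 i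
      obtain ⟨m, hmT, hmmax⟩ := hmax T hTne
      have hmCh : m ∈ Ch X'' := (Finset.mem_filter.mp hmT).1
      have hmx : pr m x := (Finset.mem_filter.mp hmT).2
      have hmX'' : m ∈ X'' := hsub X'' hmCh
      have hTeq : T = insert m ((Ch X'').filter (fun y => pr y m)) := by
        ext z
        simp only [hT, Finset.mem_insert, Finset.mem_filter]
        constructor
        · rintro ⟨hz1, hz2⟩
          by_cases hzm : z = m
          · exact Or.inl hzm
          · exact Or.inr ⟨hz1, hmmax z (Finset.mem_filter.mpr ⟨hz1, hz2⟩) hzm⟩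
        · rintro (rfl | ⟨hz1, hz2⟩)
          · exact ⟨hmCh, hmx⟩
          · exact ⟨hz1, hpr_trans hz2 hmx⟩
      have hmnot : m ∉ (Ch X'').filter (fun y => pr y m) := by
        simp [hpr_irrefl m]
      have hsum'' : ∑ y ∈ T, w y
          = w m + ∑ y ∈ (Ch X'').filter (fun y => pr y m), w y := by
        rw [hTeq, Finset.sum_insert hmnot]
      have hcard : (X''.filter (fun z => pr z m)).card ≤ n := by
        have hss : X''.filter (fun z => pr z m) ⊂ X''.filter (fun z => pr z x) := by
          constructor
          · intro z hz
            have hz' := Finset.mem_filter.mp hz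
            exact Finset.mem_filter.mpr ⟨hz'.1, hpr_trans hz'.2 hmx⟩
          · intro hsub'
            have hmm : m ∈ X''.filter (fun z => pr z m) :=
              hsub' (Finset.mem_filter.mpr ⟨hmX'', hmx⟩)
            exact hpr_irrefl m (Finset.mem_filter.mp hmm).2
        have := Finset.card_lt_card hss
        omega
      have hmono : ∑ y ∈ (Ch X').filter (fun y => pr y m), w y
          ≤ ∑ y ∈ (Ch X').filter (fun y => pr y x), w y := by
        refine Finset.sum_le_sum_of_subset_of_nonneg (fun z hz => ?_) (fun i _ _ => hw0 i)
        have hz' := Finset.mem_filter.mp hz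
        exact Finset.mem_filter.mpr ⟨hz'.1, hpr_trans hz'.2 hmx⟩
      rcases ih m hcard with hle | hBle
      · by_cases hmCh' : m ∈ Ch X'
        · left
          rw [hsum'']
          have hsubs : insert m ((Ch X').filter (fun y => pr y m))
              ⊆ (Ch X').filter (fun y => pr y x) := by
            intro z hz
            rcases Finset.mem_insert.mp hz with rfl | hz
            · exact Finset.mem_filter.mpr ⟨hmCh', hmx⟩
            · have hz' := Finset.mem_filter.mp hz
              exact Finset.mem_filter.mpr ⟨hz'.1, hpr_trans hz'.2 hmx⟩
          have hmnot' : m ∉ (Ch X').filter (fun y => pr y m) := by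
            simp [hpr_irrefl m]
          calc w m + ∑ y ∈ (Ch X'').filter (fun y => pr y m), w y
              ≤ w m + ∑ y ∈ (Ch X').filter (fun y => pr y m), w y := by linarith
            _ = ∑ y ∈ insert m ((Ch X').filter (fun y => pr y m)), w y :=
                (Finset.sum_insert hmnot').symm
            _ ≤ ∑ y ∈ (Ch X').filter (fun y => pr y x), w y :=
                Finset.sum_le_sum_of_subset_of_nonneg hsubs (fun i _ _ => hw0 i)
        · right
          have hmrej : m ∈ X' \ Ch X' :=
            Finset.mem_sdiff.mpr ⟨hXX hmX'', hmCh'⟩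
          exact le_trans (hrej X' m hmrej) hmono
      · exact Or.inr (le_trans hBle hmono)
  -- main argument
  intro x hx
  have hx' := Finset.mem_sdiff.mp hx
  refine Finset.mem_sdiff.mpr ⟨hXX hx'.1, ?_⟩
  intro hxCh'
  have h1 := hrej X'' x hx
  have h2 := hadd X' x hxCh'
  rcases key _ x le_rfl with h | h <;> linarith
end

section
/- For the choice function that greedily adds contracts in decreasing order of utility-per-unit-wage while accumulated wage is below B: if the output does not equal X' (i.e., some contract is rejected), then the total wage of the output is at least B, and the output maximizes total utility among all subsets of X' with total wage at most w(Ch(X')). -/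
/-- For the choice function that processes contracts in decreasing order
of utility-per-unit-wage (ties broken by a fixed strict total order `pr`) and adds the
current contract whenever the accumulated wage is strictly below `B`: if the output
`Ch X'` is not all of `X'` (some contract is rejected), then the total wage of the
output is at least `B`, and the output maximizes total utility among all subsets of
`X'` with total wage at most `w(Ch X')`. -/
theorem greedy_budget_overfull_and_optimal {ι : Type*} [DecidableEq ι]
    (w f : ι → ℝ) (B : ℝ) (hB : 0 < B)
    (hw : ∀ x, 0 < w x) (hf : ∀ x, 0 < f x)
    (pr : ι → ι → Prop) [DecidableRel pr]
    (hpr_trans : Transitive pr)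
    (hpr_total : ∀ x y : ι, x ≠ y → pr x y ∨ pr y x)
    (hpr_irrefl : ∀ x : ι, ¬ pr x x)
    (hpr_ratio : ∀ x y : ι, f y / w y < f x / w x → pr x y)
    (Ch : Finset ι → Finset ι)
    (hsub : ∀ A : Finset ι, Ch A ⊆ A)
    (hprefix : ∀ A : Finset ι, ∀ x ∈ Ch A, ∀ y ∈ A, pr y x → y ∈ Ch A)
    (hadd : ∀ A : Finset ι, ∀ x ∈ Ch A, ∑ y ∈ (Ch A).filter (fun y => pr y x), w y < B)
    (hrej : ∀ A : Finset ι, ∀ x ∈ A \ Ch A, B ≤ ∑ y ∈ (Ch A).filter (fun y => pr y x), w y)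
    (X' : Finset ι) (hne : Ch X' ≠ X') :
    B ≤ ∑ x ∈ Ch X', w x ∧
      ∀ X'' ⊆ X', (∑ x ∈ X'', w x ≤ ∑ x ∈ Ch X', w x) →
        ∑ x ∈ X'', f x ≤ ∑ x ∈ Ch X', f x := by
  obtain ⟨a, haX, haC⟩ : ∃ a, a ∈ X' ∧ a ∉ Ch X' := by
    by_contra h; push_neg at h
    exact hne (Finset.Subset.antisymm (hsub X') (fun x hx => h x hx))
  have hkey : ∀ y ∈ Ch X', ∀ x ∈ X', x ∉ Ch X' → pr y x := by
    intro y hy x hx hxn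
    rcases hpr_total x y (by rintro rfl; exact hxn hy) with h | h
    · exact absurd (hprefix X' y hy x hx h) hxn
    · exact h
  have hB1 : B ≤ ∑ x ∈ Ch X', w x := by
    calc B ≤ ∑ y ∈ (Ch X').filter (fun y => pr y a), w y :=
          hrej X' a (Finset.mem_sdiff.mpr ⟨haX, haC⟩)
      _ ≤ ∑ x ∈ Ch X', w x :=
          Finset.sum_le_sum_of_subset_of_nonneg (Finset.filter_subset _ _)
            (fun i _ _ => (hw i).le)
  refine ⟨hB1, ?_⟩
  have hCne : (Ch X').Nonempty := by
    by_contra h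
    rw [Finset.not_nonempty_iff_eq_empty] at h
    rw [h] at hB1; simp at hB1; linarith
  obtain ⟨y0, hy0, hy0min⟩ := Finset.exists_min_image (Ch X') (fun y => f y / w y) hCne
  set ρ := f y0 / w y0 with hρdef
  have hρpos : 0 < ρ := div_pos (hf y0) (hw y0)
  have hlow : ∀ x ∈ X', x ∉ Ch X' → f x ≤ ρ * w x := by
    intro x hx hxn
    have hpx := hkey y0 hy0 x hx hxn
    have hle : f x / w x ≤ ρ := by
      by_contra h; push_neg at h
      exact hpr_irrefl x (hpr_trans (hpr_ratio x y0 h) hpx)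
    calc f x = (f x / w x) * w x := (div_mul_cancel₀ _ (hw x).ne').symm
      _ ≤ ρ * w x := mul_le_mul_of_nonneg_right hle (hw x).le
  have hhigh : ∀ y ∈ Ch X', ρ * w y ≤ f y := by
    intro y hy
    have hle : ρ ≤ f y / w y := hy0min y hy
    calc ρ * w y ≤ (f y / w y) * w y := mul_le_mul_of_nonneg_right hle (hw y).le
      _ = f y := div_mul_cancel₀ _ (hw y).ne'
  intro X'' hX'' hw''
  have h1 : ∑ x ∈ X'' \ Ch X', f x ≤ ρ * ∑ x ∈ X'' \ Ch X', w x := by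
    rw [Finset.mul_sum]
    refine Finset.sum_le_sum (fun x hx => ?_)
    rw [Finset.mem_sdiff] at hx
    exact hlow x (hX'' hx.1) hx.2
  have h2 : ρ * ∑ x ∈ Ch X' \ X'', w x ≤ ∑ x ∈ Ch X' \ X'', f x := by
    rw [Finset.mul_sum]
    refine Finset.sum_le_sum (fun x hx => ?_)
    exact hhigh x (Finset.mem_sdiff.mp hx).1
  have e1 : ∑ x ∈ X'' ∩ Ch X', w x + ∑ x ∈ X'' \ Ch X', w x = ∑ x ∈ X'', w x :=
    Finset.sum_inter_add_sum_sdiff _ _ _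
  have e2 : ∑ x ∈ Ch X' ∩ X'', w x + ∑ x ∈ Ch X' \ X'', w x = ∑ x ∈ Ch X', w x :=
    Finset.sum_inter_add_sum_sdiff _ _ _
  have e3 : ∑ x ∈ X'' ∩ Ch X', f x + ∑ x ∈ X'' \ Ch X', f x = ∑ x ∈ X'', f x :=
    Finset.sum_inter_add_sum_sdiff _ _ _
  have e4 : ∑ x ∈ Ch X' ∩ X'', f x + ∑ x ∈ Ch X' \ X'', f x = ∑ x ∈ Ch X', f x :=
    Finset.sum_inter_add_sum_sdiff _ _ _
  rw [Finset.inter_comm] at e1 e3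
  have hw3 : ∑ x ∈ X'' \ Ch X', w x ≤ ∑ x ∈ Ch X' \ X'', w x := by linarith
  have := mul_le_mul_of_nonneg_left hw3 hρpos.le
  linarith
end

section
/- The budget-quota choice function for proportional utilities (sort X' by increasing wage, add each of the first |X'|−1 contracts if doing so keeps the total wage strictly below B, then always add the highest-wage contract) satisfies the law of aggregate demand: X'' ⊆ X' implies |Ch(X'')| ≤ |Ch(X')|. -/
/-!
Both `chProp w B X''` and `chProp w B X'` consist of a prefix of the sorted list of
contracts together with its last element, so it suffices to compare the prefix lengths.
The sorted list of `X''` is a sublist of the sorted list of `X'`, and wages increase along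
both lists, so the `k` cheapest contracts of `X'` cost at most as much as the `k` cheapest
contracts of `X''`: every prefix length admissible for `X''` is admissible for `X'`.
-/

open Finset in
/-- The budget-quota choice function for proportional utilities: sort `A` in
increasing order of wage (the fixed linear order on contracts is consistent with
increasing wage), greedily add each of the first `|A| − 1` contracts while the running
total wage stays strictly below `B` (equivalently, take the longest such prefix), and
finally always add the highest-wage (last) contract. -/
noncomputable def chProp {ι : Type*} [LinearOrder ι] (w : ι → ℝ) (B : ℝ)
    (A : Finset ι) : Finset ι := by
  classical
  exact
    let L := A.sort (· ≤ ·)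
    let k := Nat.findGreatest
      (fun k => k ≤ L.length - 1 ∧ ((L.take k).map w).sum < B) (L.length - 1)
    (L.take k).toFinset ∪ L.getLast?.toFinset

namespace List

theorem Sublist.sum_take_le_of_pairwise {M : Type*} [AddCommMonoid M] [PartialOrder M]
    [IsOrderedAddMonoid M] {l₁ l₂ : List M} (h : l₁ <+ l₂) (hl₂ : l₂.Pairwise (· ≤ ·))
    {k : ℕ} (hk : k ≤ l₁.length) : (l₂.take k).sum ≤ (l₁.take k).sum := by
  induction h generalizing k with
  | slnil => simp
  | @cons l₁ l₂ a h ih =>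
    obtain ⟨ha, hl₂⟩ := pairwise_cons.mp hl₂
    cases k with
    | zero => simp
    | succ j =>
      have hj : j < l₁.length := hk
      rw [take_succ_cons, sum_cons, sum_take_succ _ j hj, add_comm]
      exact add_le_add (ih hl₂ hj.le) (ha _ (h.subset (getElem_mem hj)))
  | @cons_cons l₁ l₂ a h ih =>
    cases k with
    | zero => simp
    | succ j =>
      rw [take_succ_cons, take_succ_cons, sum_cons, sum_cons]
      exact add_le_add_right (ih (pairwise_cons.mp hl₂).2 (by simpa using hk)) a

theorem card_toFinset_take_union_getLast? {α : Type*} [DecidableEq α] {l : List α}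
    (hl : l.Nodup) {k : ℕ} (hk : k < l.length) :
    ((l.take k).toFinset ∪ l.getLast?.toFinset).card = k + 1 := by
  have hne : l ≠ [] := ne_nil_of_length_pos (by omega)
  have hsub : l.take k ++ [l.getLast hne] <+ l := by
    have htake : l.take k = l.dropLast.take k := by
      conv_lhs => rw [← dropLast_append_getLast hne]
      exact take_append_of_le_length (by rw [length_dropLast]; omega)
    conv_rhs => rw [← dropLast_append_getLast hne]
    rw [htake]
    exact (take_sublist _ _).append (Sublist.refl _)
  have hunion : (l.take k).toFinset ∪ l.getLast?.toFinset =
      (l.take k ++ [l.getLast hne]).toFinset := by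
    simp [getLast?_eq_some_getLast hne]
  rw [hunion, toFinset_card_of_nodup (hl.sublist hsub), length_append, length_take]
  simp only [length_cons, length_nil]
  omega

end List

theorem Finset.sort_sublist_sort_of_subset {α : Type*} [LinearOrder α] {s t : Finset α}
    (h : s ⊆ t) : List.Sublist (s.sort (· ≤ ·)) (t.sort (· ≤ ·)) :=
  List.sublist_of_subperm_of_pairwise
    ((sort_nodup _ _).subperm fun _ hx => (mem_sort _).2 (h ((mem_sort _).1 hx)))
    (pairwise_sort _ _) (pairwise_sort _ _)

section chProp

variable {ι : Type*} [LinearOrder ι] (w : ι → ℝ) (B : ℝ)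

noncomputable def chPropPrefixLength (A : Finset ι) : ℕ :=
  Nat.findGreatest
    (fun k => k ≤ (A.sort (· ≤ ·)).length - 1 ∧ (((A.sort (· ≤ ·)).take k).map w).sum < B)
    ((A.sort (· ≤ ·)).length - 1)

theorem chProp_eq (A : Finset ι) :
    chProp w B A = ((A.sort (· ≤ ·)).take (chPropPrefixLength w B A)).toFinset ∪
      (A.sort (· ≤ ·)).getLast?.toFinset :=
  rfl

theorem card_chProp {A : Finset ι} (hA : A.Nonempty) :
    (chProp w B A).card = chPropPrefixLength w B A + 1 := by
  rw [chProp_eq]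
  refine List.card_toFinset_take_union_getLast? (Finset.sort_nodup _ _) ?_
  have hlen : 0 < (A.sort (· ≤ ·)).length := by simpa using hA
  exact (Nat.findGreatest_le _).trans_lt (by omega)

theorem chPropPrefixLength_mono (hw : Monotone w) {A A' : Finset ι} (h : A ⊆ A') :
    chPropPrefixLength w B A ≤ chPropPrefixLength w B A' := by
  have hsub := Finset.sort_sublist_sort_of_subset h
  have hlen : (A.sort (· ≤ ·)).length - 1 ≤ (A'.sort (· ≤ ·)).length - 1 :=
    Nat.sub_le_sub_right hsub.length_le 1
  refine Nat.findGreatest_mono (fun k ⟨hk, hsum⟩ => ⟨hk.trans hlen, ?_⟩) hlen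
  have hsorted : ((A'.sort (· ≤ ·)).map w).Pairwise (· ≤ ·) :=
    (Finset.pairwise_sort _ _).map w fun _ _ hab => hw hab
  have hk' : k ≤ ((A.sort (· ≤ ·)).map w).length := by
    rw [List.length_map]; omega
  rw [List.map_take] at hsum ⊢
  exact ((hsub.map w).sum_take_le_of_pairwise hsorted hk').trans_lt hsum

end chProp

theorem chProp_law_of_aggregate_demand_general {ι : Type*} [LinearOrder ι]
    (w : ι → ℝ) (B : ℝ)
    (hmono : Monotone w)
    (X'' X' : Finset ι) (hne : X''.Nonempty) (hXX : X'' ⊆ X') :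
    (chProp w B X'').card ≤ (chProp w B X').card := by
  rw [card_chProp w B hne, card_chProp w B (hne.mono hXX)]
  exact Nat.add_le_add_right (chPropPrefixLength_mono w B hmono hXX) 1

/-- The budget-quota choice function for proportional utilities
satisfies the law of aggregate demand: `X'' ⊆ X'` implies `|Ch(X'')| ≤ |Ch(X')|`. -/
theorem chProp_law_of_aggregate_demand {ι : Type*} [LinearOrder ι]
    (w : ι → ℝ) (B : ℝ) (hB : 0 < B) (hw : ∀ x, 0 < w x)
    (hmono : Monotone w)
    (X'' X' : Finset ι) (hne : X''.Nonempty) (hXX : X'' ⊆ X') :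
    (chProp w B X'').card ≤ (chProp w B X').card :=
  chProp_law_of_aggregate_demand_general w B hmono X'' X' hne hXX
end

section
/- The budget-quota choice function for proportional utilities satisfies substitutability: for X'' ⊆ X' ⊆ X, we have X'' \ Ch(X'') ⊆ X' \ Ch(X'), equivalently Ch(X') ∩ X'' ⊆ Ch(X''). -/
/-!
Since wages are nonnegative and `chProp` adds contracts in increasing order, a contract `x ∈ A`
that is not the largest element of `A` is chosen exactly when the total wage of the contracts of
`A` up to `x` is below `B` (the prefix sums grow with the prefix, so the longest admissible prefix
reaches `x` iff the prefix ending at `x` is admissible). Passing to a subset `X'' ⊆ X'` can only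
lower that total, and a contract not the largest of `X''` is not the largest of `X'` either, so a
contract of `X''` chosen from `X'` is chosen from `X''`.
-/

theorem Nat.le_findGreatest_iff {P : ℕ → Prop} [DecidablePred P]
    (hP : Antitone P) {j n : ℕ} (hj : 0 < j) :
    j ≤ Nat.findGreatest P n ↔ j ≤ n ∧ P j := by
  refine ⟨fun h => ?_, fun h => Nat.le_findGreatest h.1 h.2⟩
  have hk : P (Nat.findGreatest P n) := Nat.findGreatest_of_ne_zero rfl (by omega)
  exact ⟨h.trans (Nat.findGreatest_le n), hP h hk⟩

namespace List

variable {α : Type*} [LinearOrder α] {L : List α} {x : α}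

theorem Pairwise.take_idxOf_succ (hL : L.Pairwise (· < ·)) (hx : x ∈ L) :
    L.take (L.idxOf x + 1) = L.filter (· ≤ x) := by
  induction L with
  | nil => simp at hx
  | cons a t ih =>
    obtain ⟨ha, ht⟩ := pairwise_cons.1 hL
    rcases eq_or_ne x a with rfl | hxa
    · have : t.filter (· ≤ x) = [] := filter_eq_nil_iff.2 fun y hy => by simpa using ha y hy
      simp [this]
    · have hx' : x ∈ t := (mem_cons.1 hx).resolve_left hxa
      rw [idxOf_cons_ne _ hxa.symm, take_succ_cons, ih ht hx',
        filter_cons_of_pos (by simpa using (ha x hx').le)]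

theorem Pairwise.idxOf_succ_lt_length_iff (hL : L.Pairwise (· < ·)) (hx : x ∈ L) :
    L.idxOf x + 1 < L.length ↔ ∃ y ∈ L, x < y := by
  rw [← not_le, ← take_eq_self_iff, hL.take_idxOf_succ hx, filter_eq_self]
  simp

theorem Nodup.getLast?_eq_some_iff (hL : L.Nodup) (hx : x ∈ L) :
    L.getLast? = some x ↔ L.idxOf x + 1 = L.length := by
  have hlt := idxOf_lt_length_of_mem hx
  rw [getLast?_eq_getElem?]
  constructor
  · intro h
    have hn : L.length - 1 < L.length := by omega
    rw [getElem?_eq_getElem hn, Option.some_inj] at h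
    rw [← h, hL.idxOf_getElem]
    omega
  · intro h
    rw [← getElem?_idxOf hx]
    congr 1
    omega

theorem monotone_sum_take_of_nonneg {M : Type*} [AddMonoid M] [Preorder M] [AddLeftMono M]
    [AddRightMono M] {l : List M} (hl : ∀ a ∈ l, 0 ≤ a) : Monotone fun i => (l.take i).sum :=
  fun _ _ h => (take_prefix_take_left h).sublist.sum_le_sum fun a ha => hl a (mem_of_mem_take ha)

end List

theorem mem_chProp_iff {ι : Type*} [LinearOrder ι] {w : ι → ℝ} (hw : ∀ x, 0 ≤ w x) (B : ℝ)
    {A : Finset ι} {x : ι} (hx : x ∈ A) :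
    x ∈ chProp w B A ↔ ((∃ y ∈ A, x < y) → ∑ y ∈ A with y ≤ x, w y < B) := by
  unfold chProp
  simp only [Finset.mem_union, List.mem_toFinset, Option.mem_toFinset, Option.mem_def]
  set L := A.sort (· ≤ ·)
  have hL : L.Pairwise (· < ·) := (Finset.sortedLT_sort A).pairwise
  have hxL : x ∈ L := (Finset.mem_sort _).2 hx
  have hsum : ((L.take (L.idxOf x + 1)).map w).sum = ∑ y ∈ A with y ≤ x, w y := by
    rw [hL.take_idxOf_succ hxL, ← List.sum_toFinset _ (hL.nodup.filter _), List.toFinset_filter,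
      Finset.sort_toFinset]
    simp
  have hlast : (∃ y ∈ A, x < y) ↔ L.idxOf x + 1 < L.length := by
    simpa [L] using (hL.idxOf_succ_lt_length_iff hxL).symm
  have hmono : Monotone fun i => ((L.take i).map w).sum := by
    simpa only [← List.map_take] using
      List.monotone_sum_take_of_nonneg (l := L.map w) (List.forall_mem_map.2 fun y _ => hw y)
  rw [List.mem_take_iff_idxOf_lt hxL, Nat.lt_iff_add_one_le,
    Nat.le_findGreatest_iff (fun m k hmk hk => ⟨hmk.trans hk.1, (hmono hmk).trans_lt hk.2⟩)
      (Nat.succ_pos _), hL.nodup.getLast?_eq_some_iff hxL, hsum, hlast]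
  have := List.idxOf_lt_length_of_mem hxL
  rw [show L.idxOf x + 1 ≤ L.length - 1 ↔ L.idxOf x + 1 < L.length by omega,
    show L.idxOf x + 1 = L.length ↔ ¬L.idxOf x + 1 < L.length by omega]
  tauto

theorem chProp_substitutable_general {ι : Type*} [LinearOrder ι]
    (w : ι → ℝ) (B : ℝ) (hw : ∀ x, 0 < w x)
    (X'' X' : Finset ι) (hXX : X'' ⊆ X') :
    X'' \ chProp w B X'' ⊆ X' \ chProp w B X' := by
  have hw₀ : ∀ x, 0 ≤ w x := fun x => (hw x).le
  intro x hx
  obtain ⟨hx'', hrejected⟩ := Finset.mem_sdiff.1 hx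
  refine Finset.mem_sdiff.2 ⟨hXX hx'', fun hchosen => hrejected ?_⟩
  rw [mem_chProp_iff hw₀ B (hXX hx'')] at hchosen
  rw [mem_chProp_iff hw₀ B hx'']
  rintro ⟨y, hy, hxy⟩
  calc ∑ z ∈ X'' with z ≤ x, w z ≤ ∑ z ∈ X' with z ≤ x, w z :=
        Finset.sum_le_sum_of_subset_of_nonneg (Finset.filter_subset_filter _ hXX)
          fun z _ _ => hw₀ z
    _ < B := hchosen ⟨y, hXX hy, hxy⟩

/-- The budget-quota choice function for proportional utilities
satisfies substitutability: for `X'' ⊆ X'`, `X'' \ Ch(X'') ⊆ X' \ Ch(X')`. -/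
theorem chProp_substitutable {ι : Type*} [LinearOrder ι]
    (w : ι → ℝ) (B : ℝ) (hB : 0 < B) (hw : ∀ x, 0 < w x)
    (hmono : Monotone w)
    (X'' X' : Finset ι) (hXX : X'' ⊆ X') :
    X'' \ chProp w B X'' ⊆ X' \ chProp w B X' :=
  chProp_substitutable_general w B hw X'' X' hXX
end

section
/- In the running of the generalized deferred acceptance algorithm, the set Y^(i) ∪ R^(i) of considered contracts is nondecreasing in i: Y^(i−1) ∪ R^(i−1) ⊆ Y^(i) ∪ R^(i) for all i ≥ 2. -/
/-!
A contract considered at step `i - 1` is either rejected by then, and rejections are never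
undone, or it is still available at step `i`. In the latter case the doctor's set of remaining
contracts has only shrunk, while every contract she preferred to it was already gone, so she
proposes it again.
-/

section

variable {ι D : Type*}

def IsMostPreferredChoice (doc : ι → D) (acc : ι → Prop) (rk : ι → ℕ)
    (Ch : Finset ι → Finset ι) : Prop :=
  ∀ (S : Finset ι) (x : ι), x ∈ Ch S ↔
    x ∈ S ∧ acc x ∧ ∀ y ∈ S, y ≠ x → doc y = doc x → acc y → rk x < rk y

theorem IsMostPreferredChoice.mem_of_subset {doc : ι → D} {acc : ι → Prop} {rk : ι → ℕ}
    {Ch : Finset ι → Finset ι} (hCh : IsMostPreferredChoice doc acc rk Ch)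
    {S T : Finset ι} {x : ι} (hTS : T ⊆ S) (hxS : x ∈ Ch S) (hxT : x ∈ T) : x ∈ Ch T := by
  obtain ⟨-, hacc, hbest⟩ := (hCh S x).1 hxS
  exact (hCh T x).2 ⟨hxT, hacc, fun y hy => hbest y (hTS hy)⟩

end

theorem generalizedDA_considered_monotone_general {ι D : Type*} [DecidableEq ι]
    (X : Finset ι) (doc : ι → D) (acc : ι → Prop) (rk : ι → ℕ)
    (ChD : Finset ι → Finset ι)
    (hChD : ∀ (S : Finset ι) (x : ι), x ∈ ChD S ↔
      x ∈ S ∧ acc x ∧ ∀ y ∈ S, y ≠ x → doc y = doc x → acc y → rk x < rk y)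
    (Y Z R : ℕ → Finset ι)
    (hY : ∀ i, Y (i + 1) = ChD (X \ R i))
    (hR : ∀ i, R (i + 1) = R i ∪ (Y (i + 1) \ Z (i + 1)))
    (i : ℕ) (hi : 2 ≤ i) :
    Y (i - 1) ∪ R (i - 1) ⊆ Y i ∪ R i := by
  obtain ⟨j, rfl⟩ : ∃ j, i = j + 2 := ⟨i - 2, by omega⟩
  have hR_mono : ∀ k, R k ⊆ R (k + 1) := fun k => hR k ▸ Finset.subset_union_left
  intro x hx
  by_cases hxR : x ∈ R (j + 1)
  · exact Finset.mem_union_right _ (hR_mono _ hxR)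
  · have hxY : x ∈ ChD (X \ R j) := hY j ▸ (Finset.mem_union.1 hx).resolve_right hxR
    have hxX : x ∈ X := (Finset.mem_sdiff.1 ((hChD _ x).1 hxY).1).1
    refine Finset.mem_union_left _ (hY (j + 1) ▸ ?_)
    exact IsMostPreferredChoice.mem_of_subset hChD
      (sdiff_le_sdiff_left (hR_mono j)) hxY (Finset.mem_sdiff.2 ⟨hxX, hxR⟩)

/-- In the generalized deferred acceptance algorithm
(`R⁰ = ∅`; `Yⁱ = Ch_D(X \ Rⁱ⁻¹)` where each doctor chooses her most preferred
remaining acceptable contract, `Zⁱ = Ch_H(Yⁱ)`, `Rⁱ = Rⁱ⁻¹ ∪ (Yⁱ \ Zⁱ)`), the set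
`Yⁱ ∪ Rⁱ` of considered contracts is nondecreasing in `i`:
`Yⁱ⁻¹ ∪ Rⁱ⁻¹ ⊆ Yⁱ ∪ Rⁱ` for all `i ≥ 2`.  Doctor preferences are encoded by a rank
function `rk` (strict on each doctor's contracts, lower rank preferred) together with
an acceptability predicate `acc`. -/
theorem generalizedDA_considered_monotone {ι D : Type*} [DecidableEq ι]
    (X : Finset ι) (doc : ι → D) (acc : ι → Prop) (rk : ι → ℕ)
    (hstrict : ∀ x y : ι, x ≠ y → doc x = doc y → rk x ≠ rk y)
    (ChD ChH : Finset ι → Finset ι)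
    (hChD : ∀ (S : Finset ι) (x : ι), x ∈ ChD S ↔
      x ∈ S ∧ acc x ∧ ∀ y ∈ S, y ≠ x → doc y = doc x → acc y → rk x < rk y)
    (Y Z R : ℕ → Finset ι)
    (hR0 : R 0 = ∅)
    (hY : ∀ i, Y (i + 1) = ChD (X \ R i))
    (hZ : ∀ i, Z (i + 1) = ChH (Y (i + 1)))
    (hR : ∀ i, R (i + 1) = R i ∪ (Y (i + 1) \ Z (i + 1)))
    (i : ℕ) (hi : 2 ≤ i) :
    Y (i - 1) ∪ R (i - 1) ⊆ Y i ∪ R i :=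
  generalizedDA_considered_monotone_general X doc acc rk ChD hChD Y Z R hY hR i hi
end

section
/- If the hospitals' choice function Ch_H satisfies substitutability and irrelevance of rejected contracts, then at termination of the generalized DA with output X' = Y^(l) = Z^(l) and final rejected set R^(l), it holds that Ch_H(X' ∪ R^(l)) = X'. -/
/-- If the hospitals' choice function `Ch_H` satisfies substitutability
and irrelevance of rejected contracts, then at termination of the generalized DA
(iteration `l` with `Y^l = Z^l`, output `X' = Y^l`, final rejected set `R^l`) it holds
that `Ch_H(X' ∪ R^l) = X'`.  Doctor preferences are encoded by a rank function `rk`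
(strict on each doctor's contracts, lower rank preferred) together with an
acceptability predicate `acc`. -/
theorem generalizedDA_ChH_of_union_rejected {ι D : Type*} [DecidableEq ι]
    (X : Finset ι) (doc : ι → D) (acc : ι → Prop) (rk : ι → ℕ)
    (hstrict : ∀ x y : ι, x ≠ y → doc x = doc y → rk x ≠ rk y)
    (ChD ChH : Finset ι → Finset ι)
    (hChD : ∀ (S : Finset ι) (x : ι), x ∈ ChD S ↔
      x ∈ S ∧ acc x ∧ ∀ y ∈ S, y ≠ x → doc y = doc x → acc y → rk x < rk y)
    (hChHsub : ∀ S : Finset ι, ChH S ⊆ S)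
    (hSUB : ∀ S T : Finset ι, S ⊆ T → S \ ChH S ⊆ T \ ChH T)
    (hIRC : ∀ S T : Finset ι, Disjoint S T → ChH (S ∪ T) ⊆ S → ChH (S ∪ T) = ChH S)
    (Y Z R : ℕ → Finset ι)
    (hR0 : R 0 = ∅)
    (hY : ∀ i, Y (i + 1) = ChD (X \ R i))
    (hZ : ∀ i, Z (i + 1) = ChH (Y (i + 1)))
    (hR : ∀ i, R (i + 1) = R i ∪ (Y (i + 1) \ Z (i + 1)))
    (l : ℕ) (hl : 1 ≤ l) (hterm : Y l = Z l) :
    ChH (Y l ∪ R l) = Y l := by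
  obtain ⟨m, rfl⟩ : ∃ m, l = m + 1 := ⟨l - 1, (Nat.succ_pred_eq_of_pos hl).symm⟩
  -- monotonicity of R
  have hmono : ∀ i j : ℕ, i ≤ j → R i ⊆ R j := by
    intro i j hij
    induction j, hij using Nat.le_induction with
    | base => exact subset_rfl
    | succ n hn ih => exact ih.trans (by rw [hR n]; exact Finset.subset_union_left)
  -- Y (i+1) ⊆ X \ R i
  have hYsub : ∀ i, Y (i + 1) ⊆ X \ R i := by
    intro i x hx
    rw [hY i] at hx
    exact Finset.mem_sdiff.mpr ⟨(Finset.mem_sdiff.mp ((hChD _ x).1 hx).1).1,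
      (Finset.mem_sdiff.mp ((hChD _ x).1 hx).1).2⟩
  -- R (m+1) = R m
  have hRl : R (m + 1) = R m := by
    rw [hR m, ← hterm]
    simp
  -- unrejected elements of earlier Y stay in Y l
  have hkey : ∀ i, i ≤ m → Y (i + 1) ⊆ Y (m + 1) ∪ R (m + 1) := by
    intro i hi x hx
    by_cases hxR : x ∈ R (m + 1)
    · exact Finset.mem_union_right _ hxR
    · refine Finset.mem_union_left _ ?_
      rw [hY i] at hx
      obtain ⟨hxS, hacc, hbest⟩ := (hChD _ x).1 hx
      rw [hY m]
      refine (hChD _ x).2 ⟨?_, hacc, ?_⟩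
      · refine Finset.mem_sdiff.mpr ⟨(Finset.mem_sdiff.mp hxS).1, ?_⟩
        intro hxm
        exact hxR (hRl ▸ hxm)
      · intro y hy hne hdoc haccy
        refine hbest y ?_ hne hdoc haccy
        rw [Finset.mem_sdiff] at hy ⊢
        exact ⟨hy.1, fun h => hy.2 (hmono i m hi h)⟩
  -- every element of R l is rejected from Y l ∪ R l
  have hrej : ∀ i, i ≤ m + 1 →
      R i ⊆ (Y (m + 1) ∪ R (m + 1)) \ ChH (Y (m + 1) ∪ R (m + 1)) := by
    intro i hi
    induction i with
    | zero => rw [hR0]; exact Finset.empty_subset _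
    | succ n ih =>
      rw [hR n]
      refine Finset.union_subset (ih (Nat.le_of_succ_le hi)) ?_
      have hsub : Y (n + 1) ⊆ Y (m + 1) ∪ R (m + 1) :=
        hkey n (Nat.succ_le_succ_iff.mp hi)
      intro x hx
      have : x ∈ Y (n + 1) \ ChH (Y (n + 1)) := by rw [← hZ n]; exact hx
      exact hSUB _ _ hsub this
  -- ChH (Y l ∪ R l) ⊆ Y l
  have hsubYl : ChH (Y (m + 1) ∪ R (m + 1)) ⊆ Y (m + 1) := by
    intro x hx
    have hxu := hChHsub _ hx
    rcases Finset.mem_union.mp hxu with h | h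
    · exact h
    · exact absurd hx (Finset.mem_sdiff.mp (hrej (m + 1) le_rfl h)).2
  -- disjointness
  have hdisj : Disjoint (Y (m + 1)) (R (m + 1)) := by
    rw [hRl]
    exact Finset.disjoint_left.mpr fun x hx hxr =>
      (Finset.mem_sdiff.mp (hYsub m hx)).2 hxr
  rw [hIRC _ _ hdisj hsubYl, ← hZ m, ← hterm]
end

section
/- Suppose each hospital's choice function satisfies substitutability, irrelevance of rejected contracts, and compatibility. Then the generalized DA outputs a matching X' that is B'_H-stable, where B'_h = max{B_h, w_h(X')} for each hospital h: no hospital h has a set X'' ⊆ X_h with w_h(X'') ≤ B'_h, f_h(X'') > f_h(X'_h), and every doctor appearing in X''\X' weakly prefers her contract in X'' to her assignment in X'. -/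
private lemma DA_escalation {ι : Type*} [DecidableEq ι]
    (S : ℕ → Finset ι) (Ch : Finset ι → Finset ι)
    (hchain : ∀ k, Ch (S (k+1)) ⊆ S (k+2)) :
    ∀ i, ∀ j ≤ i, ∀ x, x ∈ S (j+1) → x ∉ S (i+2) →
      ∃ k ≤ i, x ∈ S (k+1) ∧ x ∉ Ch (S (k+1)) := by
  intro i
  induction i with
  | zero =>
    intro j hj x hx hnx
    interval_cases j
    exact ⟨0, le_refl 0, hx, fun hc => hnx (hchain 0 hc)⟩
  | succ n ih =>
    intro j hj x hx hnx
    by_cases hxn : x ∈ S (n+2)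
    · by_cases hc : x ∈ Ch (S (n+2))
      · exact absurd (hchain (n+1) hc) hnx
      · exact ⟨n+1, le_refl _, hxn, hc⟩
    · rcases Nat.lt_or_ge j (n+1) with hj' | hj'
      · obtain ⟨k, hk, h1, h2⟩ := ih j (Nat.lt_succ_iff.mp hj') x hx hxn
        exact ⟨k, hk.trans (Nat.le_succ n), h1, h2⟩
      · have hje : j = n+1 := le_antisymm hj hj'
        subst hje
        exact absurd hx hxn

private lemma DA_choice_union {ι Hos : Type*} [DecidableEq ι]
    (hos : ι → Hos) (h : Hos) (Ch : Finset ι → Finset ι)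
    (S : ℕ → Finset ι) (m : ℕ)
    (hQ : ∀ i, ∀ x ∈ S i, hos x = h)
    (hchain : ∀ k, Ch (S (k+1)) ⊆ S (k+2))
    (hsub : ∀ A, Ch A ⊆ A)
    (hSUB : ∀ A B, (∀ x ∈ B, hos x = h) → A ⊆ B → A \ Ch A ⊆ B \ Ch B)
    (hIRC : ∀ A B, (∀ x ∈ A ∪ B, hos x = h) → Disjoint A B → Ch (A ∪ B) ⊆ A →
      Ch (A ∪ B) = Ch A) :
    Ch ((Finset.range (m+1)).biUnion (fun j => S (j+1))) = Ch (S (m+1)) := by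
  set U : Finset ι := (Finset.range (m+1)).biUnion (fun j => S (j+1)) with hUdef
  have hUQ : ∀ x ∈ U, hos x = h := by
    intro x hx
    obtain ⟨j, _, hxS⟩ := Finset.mem_biUnion.mp hx
    exact hQ (j+1) x hxS
  have hSU : ∀ k ≤ m, S (k+1) ⊆ U := by
    intro k hk x hx
    exact Finset.mem_biUnion.mpr ⟨k, Finset.mem_range.mpr (Nat.lt_succ_of_le hk), hx⟩
  have hsubU : S (m+1) ⊆ U := hSU m (le_refl m)
  have hchU : Ch U ⊆ S (m+1) := by
    intro x hx
    by_contra hxn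
    have hxU : x ∈ U := hsub U hx
    obtain ⟨j, hj, hxS⟩ := Finset.mem_biUnion.mp hxU
    have hjm : j < m := by
      rcases Nat.lt_or_ge j m with h' | h'
      · exact h'
      · have : j = m := le_antisymm (Nat.lt_succ_iff.mp (Finset.mem_range.mp hj)) h'
        subst this; exact absurd hxS hxn
    obtain ⟨n, rfl⟩ : ∃ n, m = n + 1 := ⟨m - 1, by omega⟩
    obtain ⟨k, hk, h1, h2⟩ := DA_escalation S Ch hchain n j (by omega) x hxS hxn
    have hrej : x ∈ U \ Ch U :=
      hSUB (S (k+1)) U hUQ (hSU k (by omega)) (Finset.mem_sdiff.mpr ⟨h1, h2⟩)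
    exact (Finset.mem_sdiff.mp hrej).2 hx
  have hun : S (m+1) ∪ (U \ S (m+1)) = U := Finset.union_sdiff_of_subset hsubU
  have := hIRC (S (m+1)) (U \ S (m+1))
    (by rw [hun]; exact hUQ) Finset.disjoint_sdiff (by rw [hun]; exact hchU)
  rwa [hun] at this

/-- Suppose each hospital `h`'s choice function `Chh h` (acting on sets
of `h`'s contracts) satisfies substitutability, irrelevance of rejected contracts, and
compatibility (COM: for `X'' ⊆ X' ⊆ X_h` with `w_h(X'') ≤ max{B_h, w_h(Chh h X')}`,
`f_h(Chh h X') ≥ f_h(X'')`, where hospital utilities are additive).  Then the output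
`X' = Y^l` of the generalized DA (doctors propose their most preferred remaining
acceptable contracts, hospitals choose via their choice functions, rejections
accumulate, termination when nothing is rejected) is a matching that is
`B'_H`-stable with `B'_h = max{B_h, w_h(X')}`: no hospital `h` has a blocking set
`X'' ⊆ X_h` (at most one contract per doctor) with `w_h(X'') ≤ B'_h`,
`f_h(X'') > f_h(X'_h)`, such that every doctor with a contract in `X'' \ X'` prefers
her contract in `X''` to her assignment under `X'`. -/
theorem generalizedDA_near_feasible_stable
    {ι Doc Hos : Type*} [DecidableEq ι] [DecidableEq Doc] [DecidableEq Hos]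
    (X : Finset ι) (doc : ι → Doc) (hos : ι → Hos)
    (wage util : ι → ℝ) (Bud : Hos → ℝ)
    (hwage : ∀ x, 0 < wage x) (hutil : ∀ x, 0 < util x) (hBud : ∀ h, 0 < Bud h)
    (acc : ι → Prop) (rk : ι → ℕ)
    (hstrict : ∀ x y : ι, x ≠ y → doc x = doc y → rk x ≠ rk y)
    (ChD ChH : Finset ι → Finset ι) (Chh : Hos → Finset ι → Finset ι)
    (hChD : ∀ (S : Finset ι) (x : ι), x ∈ ChD S ↔
      x ∈ S ∧ acc x ∧ ∀ y ∈ S, y ≠ x → doc y = doc x → acc y → rk x < rk y)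
    (hChh_sub : ∀ (h : Hos) (S : Finset ι), Chh h S ⊆ S)
    (hChH : ∀ (S : Finset ι) (x : ι), x ∈ ChH S ↔
      x ∈ Chh (hos x) (S.filter (fun y => hos y = hos x)))
    (hSUB : ∀ (h : Hos) (S T : Finset ι), (∀ x ∈ T, hos x = h) → S ⊆ T →
      S \ Chh h S ⊆ T \ Chh h T)
    (hIRC : ∀ (h : Hos) (S T : Finset ι), (∀ x ∈ S ∪ T, hos x = h) → Disjoint S T →
      Chh h (S ∪ T) ⊆ S → Chh h (S ∪ T) = Chh h S)
    (hCOM : ∀ (h : Hos) (X' X'' : Finset ι), (∀ x ∈ X', hos x = h) → X'' ⊆ X' →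
      (∑ x ∈ X'', wage x ≤ max (Bud h) (∑ x ∈ Chh h X', wage x)) →
      ∑ x ∈ X'', util x ≤ ∑ x ∈ Chh h X', util x)
    (Y Z R : ℕ → Finset ι)
    (hR0 : R 0 = ∅)
    (hY : ∀ i, Y (i + 1) = ChD (X \ R i))
    (hZ : ∀ i, Z (i + 1) = ChH (Y (i + 1)))
    (hR : ∀ i, R (i + 1) = R i ∪ (Y (i + 1) \ Z (i + 1)))
    (l : ℕ) (hl : 1 ≤ l) (hterm : Y l = Z l) :
    (∀ d : Doc, ((Y l).filter (fun x => doc x = d)).card ≤ 1) ∧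
    ¬ ∃ (h : Hos) (C : Finset ι),
        (∀ x ∈ C, hos x = h) ∧ C ⊆ X ∧
        (∀ d : Doc, (C.filter (fun x => doc x = d)).card ≤ 1) ∧
        (∀ x ∈ C, x ∉ Y l → acc x ∧ ∀ y ∈ Y l, doc y = doc x → rk x < rk y) ∧
        (∑ x ∈ C, wage x ≤
          max (Bud h) (∑ x ∈ (Y l).filter (fun x => hos x = h), wage x)) ∧
        (∑ x ∈ (Y l).filter (fun x => hos x = h), util x < ∑ x ∈ C, util x) := by
  classical
  obtain ⟨m, rfl⟩ : ∃ m, l = m + 1 := ⟨l - 1, (Nat.succ_pred_eq_of_pos hl).symm⟩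
  -- basic facts
  have hRmono : ∀ i, R i ⊆ R (i+1) := by
    intro i; rw [hR i]; exact Finset.subset_union_left
  have hZsubY : ∀ i, Z (i+1) ⊆ Y (i+1) := by
    intro i x hx
    rw [hZ i] at hx
    have := (hChH (Y (i+1)) x).mp hx
    exact Finset.mem_filter.mp (hChh_sub _ _ this) |>.1
  have hZY : ∀ i, Z (i+1) ⊆ Y (i+2) := by
    intro i x hx
    have hxY : x ∈ Y (i+1) := hZsubY i hx
    rw [hY i] at hxY
    rw [hY (i+1)]
    rw [hChD] at hxY ⊢
    obtain ⟨hxS, hacc, hmin⟩ := hxY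
    rw [Finset.mem_sdiff] at hxS
    refine ⟨?_, hacc, ?_⟩
    · rw [Finset.mem_sdiff]
      refine ⟨hxS.1, ?_⟩
      rw [hR i]
      rw [Finset.mem_union]
      push_neg
      exact ⟨hxS.2, fun hc => (Finset.mem_sdiff.mp hc).2 hx⟩
    · intro y hy hne hdoc hacy
      have hy' : y ∈ X \ R i :=
        Finset.sdiff_subset_sdiff (Finset.Subset.refl X) (hRmono i) hy
      exact hmin y hy' hne hdoc hacy
  have hRdecomp : ∀ i, ∀ x ∈ R i, ∃ k, k + 1 ≤ i ∧ x ∈ Y (k+1) ∧ x ∉ Z (k+1) := by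
    intro i
    induction i with
    | zero => intro x hx; rw [hR0] at hx; exact absurd hx (Finset.notMem_empty x)
    | succ n ih =>
      intro x hx
      rw [hR n, Finset.mem_union] at hx
      rcases hx with hx | hx
      · obtain ⟨k, hk, h1, h2⟩ := ih x hx
        exact ⟨k, hk.trans (Nat.le_succ n), h1, h2⟩
      · rw [Finset.mem_sdiff] at hx
        exact ⟨n, le_refl _, hx.1, hx.2⟩
  have hYl : Y (m+1) = ChD (X \ R m) := hY m
  -- doctor optimality: every remaining acceptable contract is weakly dominated
  have hdocopt : ∀ x ∈ X \ R m, acc x → ∃ y ∈ Y (m+1), doc y = doc x ∧ rk y ≤ rk x := by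
    intro x hx hacx
    set F := (X \ R m).filter (fun z => doc z = doc x ∧ acc z) with hF
    have hxF : x ∈ F := Finset.mem_filter.mpr ⟨hx, rfl, hacx⟩
    obtain ⟨y, hyF, hymin⟩ := F.exists_min_image rk ⟨x, hxF⟩
    rw [hF, Finset.mem_filter] at hyF
    refine ⟨y, ?_, hyF.2.1, hymin x hxF⟩
    rw [hYl, hChD]
    refine ⟨hyF.1, hyF.2.2, ?_⟩
    intro z hz hne hdz hacz
    have hzF : z ∈ F := Finset.mem_filter.mpr ⟨hz, hdz.trans hyF.2.1, hacz⟩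
    have := hymin z hzF
    exact lt_of_le_of_ne this (hstrict y z hne.symm hdz.symm)
  constructor
  · -- matching
    intro d
    rw [Finset.card_le_one]
    intro a ha b hb
    rw [Finset.mem_filter] at ha hb
    by_contra hne
    have ha' := (hChD _ a).mp (hYl ▸ ha.1)
    have hb' := (hChD _ b).mp (hYl ▸ hb.1)
    have h1 := ha'.2.2 b hb'.1 (fun e => hne e.symm) (hb.2.trans ha.2.symm) hb'.2.1
    have h2 := hb'.2.2 a ha'.1 hne (ha.2.trans hb.2.symm) ha'.2.1
    omega
  · rintro ⟨h, C, hCh, hCX, hCdoc, hCpref, hCwage, hCutil⟩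
    -- filtered sets
    set S : ℕ → Finset ι := fun i => (Y i).filter (fun x => hos x = h) with hSdef
    have hSQ : ∀ i, ∀ x ∈ S i, hos x = h := by
      intro i x hx; exact (Finset.mem_filter.mp hx).2
    have hZS : ∀ i x, hos x = h → (x ∈ Z (i+1) ↔ x ∈ Chh h (S (i+1))) := by
      intro i x hxh
      rw [hZ i, hChH, hxh]
    have hchain : ∀ k, Chh h (S (k+1)) ⊆ S (k+2) := by
      intro k x hx
      have hxS : x ∈ S (k+1) := hChh_sub _ _ hx
      have hxh : hos x = h := hSQ _ x hxS
      have hxZ : x ∈ Z (k+1) := (hZS k x hxh).mpr hx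
      exact Finset.mem_filter.mpr ⟨hZY k hxZ, hxh⟩
    have hUch : Chh h ((Finset.range (m+1)).biUnion (fun j => S (j+1))) = Chh h (S (m+1)) :=
      DA_choice_union hos h (Chh h) S m hSQ hchain (hChh_sub h)
        (fun A B => hSUB h A B) (fun A B => hIRC h A B)
    have hSl : Chh h (S (m+1)) = S (m+1) := by
      apply Finset.Subset.antisymm (hChh_sub _ _)
      intro x hx
      have hxh : hos x = h := hSQ _ x hx
      have hxZ : x ∈ Z (m+1) := hterm ▸ (Finset.mem_filter.mp hx).1
      exact (hZS m x hxh).mp hxZ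
    set U : Finset ι := (Finset.range (m+1)).biUnion (fun j => S (j+1)) with hUdef
    have hUQ : ∀ x ∈ U, hos x = h := by
      intro x hx
      obtain ⟨j, _, hxS⟩ := Finset.mem_biUnion.mp hx
      exact hSQ (j+1) x hxS
    have hCU : C ⊆ U := by
      intro x hxC
      by_cases hxY : x ∈ Y (m+1)
      · exact Finset.mem_biUnion.mpr ⟨m, Finset.mem_range.mpr (Nat.lt_succ_self m),
          Finset.mem_filter.mpr ⟨hxY, hCh x hxC⟩⟩
      · obtain ⟨hacx, hpref⟩ := hCpref x hxC hxY
        have hxR : x ∈ R m := by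
          by_contra hxR
          obtain ⟨y, hyY, hydoc, hyrk⟩ :=
            hdocopt x (Finset.mem_sdiff.mpr ⟨hCX hxC, hxR⟩) hacx
          exact absurd (hpref y hyY hydoc) (not_lt.mpr hyrk)
        obtain ⟨k, hk, hkY, _⟩ := hRdecomp m x hxR
        exact Finset.mem_biUnion.mpr ⟨k, Finset.mem_range.mpr (by omega),
          Finset.mem_filter.mpr ⟨hkY, hCh x hxC⟩⟩
    have hkey := hCOM h U C hUQ hCU (by rw [hUch, hSl]; exact hCwage)
    rw [hUch, hSl] at hkey
    exact absurd hCutil (not_lt.mpr hkey)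
end

section
/- For any w_max, w_min, B with 0 < w_min ≤ w_max ≤ B, there is a set of 2⌊B/w_min⌋ contracts (k of wage w_min and utility w_min each, k of wage w_max and utility 2·w_max each, where k = ⌊B/w_min⌋) such that every choice function satisfying the law of aggregate demand and compatibility must, on some input, select a set of total wage strictly greater than w_max·(B − w_max)/w_min. -/
/-- For any `w_max, w_min, B` with `0 < w_min ≤ w_max ≤ B`, there is a
set of `2·k` contracts, `k = ⌊B / w_min⌋` of wage `w_min` and utility `w_min` each,
and `k` of wage `w_max` and utility `2·w_max` each, such that every choice function
satisfying the law of aggregate demand and compatibility must, on some input, select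
a set of total wage strictly greater than `w_max·(B − w_max)/w_min`. -/
theorem lower_bound_LAD_COM (wmin wmax B : ℝ)
    (h1 : 0 < wmin) (h2 : wmin ≤ wmax) (h3 : wmax ≤ B) :
    ∃ (k : ℕ) (w f : Fin (2 * k) → ℝ),
      k = ⌊B / wmin⌋₊ ∧
      (∀ i : Fin (2 * k), (i : ℕ) < k → w i = wmin ∧ f i = wmin) ∧
      (∀ i : Fin (2 * k), k ≤ (i : ℕ) → w i = wmax ∧ f i = 2 * wmax) ∧
      ∀ Ch : Finset (Fin (2 * k)) → Finset (Fin (2 * k)),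
        (∀ S, Ch S ⊆ S) →
        (∀ S T, S ⊆ T → (Ch S).card ≤ (Ch T).card) →
        (∀ S T, T ⊆ S → (∑ x ∈ T, w x ≤ max B (∑ x ∈ Ch S, w x)) →
          ∑ x ∈ T, f x ≤ ∑ x ∈ Ch S, f x) →
        ∃ S, wmax * (B - wmax) / wmin < ∑ x ∈ Ch S, w x := by
  classical
  set k := ⌊B / wmin⌋₊ with hkdef
  have hwmax0 : 0 < wmax := lt_of_lt_of_le h1 h2
  have hBw : (1:ℝ) ≤ B / wmin := (le_div_iff₀ h1).mpr (by linarith)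
  have hBw0 : (0:ℝ) ≤ B / wmin := le_trans zero_le_one hBw
  -- floor bounds
  have hkle : (k : ℝ) * wmin ≤ B := by
    have := Nat.floor_le hBw0
    calc (k:ℝ) * wmin ≤ (B / wmin) * wmin := by
          apply mul_le_mul_of_nonneg_right this h1.le
      _ = B := by field_simp
  have hklt : B < ((k : ℝ) + 1) * wmin := by
    have := Nat.lt_floor_add_one (B / wmin)
    calc B = (B / wmin) * wmin := by field_simp
      _ < ((k:ℝ) + 1) * wmin := by
          apply mul_lt_mul_of_pos_right _ h1
          exact_mod_cast this
  refine ⟨k, fun i => if (i : ℕ) < k then wmin else wmax,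
    fun i => if (i : ℕ) < k then wmin else 2 * wmax, rfl, ?_, ?_, ?_⟩
  · intro i hi; simp [hi]
  · intro i hi; simp [Nat.not_lt.mpr hi]
  intro Ch hsub hLAD hCOM
  by_contra hcon
  push_neg at hcon
  set w : Fin (2 * k) → ℝ := fun i => if (i : ℕ) < k then wmin else wmax with hw
  set f : Fin (2 * k) → ℝ := fun i => if (i : ℕ) < k then wmin else 2 * wmax with hf
  set P : Fin (2 * k) → Prop := fun i => (i : ℕ) < k with hP
  -- sum computations
  have hsumw : ∀ S : Finset (Fin (2 * k)),
      ∑ x ∈ S, w x = (S.filter P).card * wmin + (S.filter (fun x => ¬ P x)).card * wmax := by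
    intro S
    rw [← Finset.sum_filter_add_sum_filter_not S P]
    congr 1
    · rw [Finset.sum_congr rfl (fun x hx => if_pos (Finset.mem_filter.mp hx).2),
        Finset.sum_const, nsmul_eq_mul]
    · rw [Finset.sum_congr rfl (fun x hx => if_neg (Finset.mem_filter.mp hx).2),
        Finset.sum_const, nsmul_eq_mul]
  have hsumf : ∀ S : Finset (Fin (2 * k)),
      ∑ x ∈ S, f x = (S.filter P).card * wmin
        + (S.filter (fun x => ¬ P x)).card * (2 * wmax) := by
    intro S
    rw [← Finset.sum_filter_add_sum_filter_not S P]
    congr 1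
    · rw [Finset.sum_congr rfl (fun x hx => if_pos (Finset.mem_filter.mp hx).2),
        Finset.sum_const, nsmul_eq_mul]
    · rw [Finset.sum_congr rfl (fun x hx => if_neg (Finset.mem_filter.mp hx).2),
        Finset.sum_const, nsmul_eq_mul]
  -- cardinality of the low set
  have hkpos : 0 < k := Nat.floor_pos.mpr hBw
  have hk2k : k ≤ 2 * k := by omega
  set L : Finset (Fin (2 * k)) := Finset.univ.filter P with hL
  have hcardL : L.card = k := by
    have : L = Finset.Iio (⟨k, by omega⟩ : Fin (2 * k)) := by
      ext x
      simp [hL, hP, Finset.mem_Iio, Fin.lt_def]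
    rw [this, Fin.card_Iio]
  have hcardH : (Finset.univ.filter (fun x => ¬ P x)).card = k := by
    have := Finset.card_filter_add_card_filter_not (s := Finset.univ) (p := P)
    rw [Finset.card_univ, Fintype.card_fin] at this
    have hL' : (Finset.univ.filter P).card = k := hcardL
    omega
  -- every element of subsets of L is low
  have hfilterL : ∀ S : Finset (Fin (2 * k)), S ⊆ L →
      S.filter P = S ∧ S.filter (fun x => ¬ P x) = ∅ := by
    intro S hS
    constructor
    · exact Finset.filter_eq_self.mpr (fun x hx => (Finset.mem_filter.mp (hS hx)).2)
    · exact Finset.filter_eq_empty_iff.mpr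
        (fun x hx => not_not_intro (Finset.mem_filter.mp (hS hx)).2)
  -- w(L) = k * wmin, f(L) = k * wmin
  have hwL : ∑ x ∈ L, w x = k * wmin := by
    rw [hsumw, (hfilterL L (le_refl L)).1, (hfilterL L (le_refl L)).2, hcardL]
    simp
  have hfL : ∑ x ∈ L, f x = k * wmin := by
    rw [hsumf, (hfilterL L (le_refl L)).1, (hfilterL L (le_refl L)).2, hcardL]
    simp
  -- Ch L has at least k elements
  have hChL : k ≤ (Ch L).card := by
    have hcom := hCOM L L (le_refl L) (by rw [hwL]; exact le_max_of_le_left hkle)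
    rw [hfL, hsumf, (hfilterL (Ch L) (hsub L)).1, (hfilterL (Ch L) (hsub L)).2] at hcom
    simp only [Finset.card_empty, Nat.cast_zero, zero_mul, add_zero] at hcom
    have : (k : ℝ) ≤ (Ch L).card := le_of_mul_le_mul_right (by linarith) h1
    exact_mod_cast this
  -- Ch univ has at least k elements
  have hChU : k ≤ (Ch Finset.univ).card :=
    le_trans hChL (hLAD L Finset.univ (Finset.subset_univ L))
  set C : Finset (Fin (2 * k)) := Ch Finset.univ with hC
  set a : ℕ := (C.filter P).card with ha
  set b : ℕ := (C.filter (fun x => ¬ P x)).card with hb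
  have hab : a + b = C.card := Finset.card_filter_add_card_filter_not (p := P)
  have hbk : b ≤ k := by
    rw [← hcardH]
    exact Finset.card_le_card (Finset.filter_subset_filter _ (Finset.subset_univ C))
  -- the ceiling r
  set r : ℕ := ⌈wmax / wmin⌉₊ with hr
  have hr1 : wmax ≤ (r : ℝ) * wmin := by
    have := Nat.le_ceil (wmax / wmin)
    calc wmax = (wmax / wmin) * wmin := by field_simp
      _ ≤ (r : ℝ) * wmin := mul_le_mul_of_nonneg_right this h1.le
  have hr2 : (r : ℝ) * wmin < wmax + wmin := by
    have h0 : (0:ℝ) ≤ wmax / wmin := div_nonneg hwmax0.le h1.le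
    have := Nat.ceil_lt_add_one h0
    calc (r : ℝ) * wmin < (wmax / wmin + 1) * wmin := by
          apply mul_lt_mul_of_pos_right this h1
      _ = wmax + wmin := by field_simp
  -- key dichotomy : a < r or b = k
  have hdich : a < r ∨ b = k := by
    by_contra hcon2
    push_neg at hcon2
    obtain ⟨har, hbne⟩ := hcon2
    have hblt : b < k := lt_of_le_of_ne hbk hbne
    -- pick r low contracts from C
    obtain ⟨A, hA, hAcard⟩ := Finset.exists_subset_card_eq har
    have hAC : A ⊆ C := le_trans hA (Finset.filter_subset _ _)
    -- pick a high contract not in C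
    have hne : ((Finset.univ.filter (fun x => ¬ P x)) \ C).Nonempty := by
      rw [Finset.sdiff_nonempty]
      intro hle
      have : Finset.univ.filter (fun x => ¬ P x) ⊆ C.filter (fun x => ¬ P x) := by
        intro x hx
        exact Finset.mem_filter.mpr ⟨hle hx, (Finset.mem_filter.mp hx).2⟩
      have := Finset.card_le_card this
      omega
    obtain ⟨h, hh⟩ := hne
    have hhP : ¬ P h := (Finset.mem_filter.mp (Finset.mem_sdiff.mp hh).1).2
    have hhC : h ∉ C := (Finset.mem_sdiff.mp hh).2
    have hhCA : h ∉ C \ A := fun hx => hhC (Finset.mem_sdiff.mp hx).1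
    set T : Finset (Fin (2 * k)) := insert h (C \ A) with hT
    have hwA : ∑ x ∈ A, w x = (r : ℝ) * wmin := by
      rw [Finset.sum_congr rfl (fun x hx => if_pos (Finset.mem_filter.mp (hA hx)).2),
        Finset.sum_const, nsmul_eq_mul, hAcard]
    have hfA : ∑ x ∈ A, f x = (r : ℝ) * wmin := by
      rw [Finset.sum_congr rfl (fun x hx => if_pos (Finset.mem_filter.mp (hA hx)).2),
        Finset.sum_const, nsmul_eq_mul, hAcard]
    have hwT : ∑ x ∈ T, w x = wmax + (∑ x ∈ C, w x - (r : ℝ) * wmin) := by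
      rw [hT, Finset.sum_insert hhCA, Finset.sum_sdiff_eq_sub hAC, hwA]
      have : w h = wmax := if_neg hhP
      rw [this]
    have hfT : ∑ x ∈ T, f x = 2 * wmax + (∑ x ∈ C, f x - (r : ℝ) * wmin) := by
      rw [hT, Finset.sum_insert hhCA, Finset.sum_sdiff_eq_sub hAC, hfA]
      have : f h = 2 * wmax := if_neg hhP
      rw [this]
    have hcom := hCOM Finset.univ T (Finset.subset_univ T)
      (by rw [hwT]; exact le_max_of_le_right (by linarith))
    rw [hfT] at hcom
    have : (r:ℝ) * wmin < 2 * wmax := by linarith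
    linarith
  -- final contradiction
  have hconU := hcon Finset.univ
  have hwC : ∑ x ∈ C, w x = (a : ℝ) * wmin + (b : ℝ) * wmax := hsumw C
  have hconU' : ((a : ℝ) * wmin + (b : ℝ) * wmax) * wmin ≤ wmax * (B - wmax) := by
    rw [← hwC]
    exact (le_div_iff₀ h1).mp hconU
  have ha0 : (0:ℝ) ≤ (a : ℝ) := Nat.cast_nonneg a
  have hb0 : (0:ℝ) ≤ (b : ℝ) := Nat.cast_nonneg b
  have h6 : wmax * B < wmax * (((k:ℝ) + 1) * wmin) := mul_lt_mul_of_pos_left hklt hwmax0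
  rcases hdich with hcase | hcase
  · -- a < r, so b ≥ k - a and a * wmin ≤ wmax
    have hba : (k : ℝ) ≤ (a : ℝ) + (b : ℝ) := by
      have : k ≤ a + b := by omega
      exact_mod_cast this
    have hawmin : (a : ℝ) * wmin ≤ wmax := by
      have : ((a : ℝ) + 1) * wmin ≤ (r : ℝ) * wmin := by
        apply mul_le_mul_of_nonneg_right _ h1.le
        have : (a : ℝ) + 1 ≤ (r : ℝ) := by exact_mod_cast hcase
        linarith
      linarith
    have h4 : ((k:ℝ) - a) * (wmax * wmin) ≤ (b : ℝ) * (wmax * wmin) :=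
      mul_le_mul_of_nonneg_right (by linarith) (mul_nonneg hwmax0.le h1.le)
    have h5 : 0 ≤ (wmax - (a:ℝ) * wmin) * (wmax - wmin) :=
      mul_nonneg (by linarith) (by linarith)
    nlinarith [h4, h5, h6, hconU']
  · -- b = k
    have hbk' : (b : ℝ) = (k : ℝ) := by exact_mod_cast hcase
    have h7 : wmax * wmin ≤ wmax * wmax := mul_le_mul_of_nonneg_left h2 hwmax0.le
    have h8 : 0 ≤ (a:ℝ) * wmin * wmin := mul_nonneg (mul_nonneg ha0 h1.le) h1.le
    nlinarith [h6, h7, h8, hconU']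
end
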